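/- arXiv:1410.3183 — 4 statements merged into one kernel-verified Lean document; each statement's English description precedes it below -/
import Mathlib

section
/- For all (s,z) ∈ ℝ², the cross product of the partial derivatives of F* satisfies F*_s × F*_z = −λ(z)² cosh(s) sinh(s) e_z + λ(z)² cosh(s) (cos z, −sin z, 0), where e_z = (0,0,1); consequently |F*_s × F*_z|² = λ(z)⁴ cosh⁴(s), and the unit normal ν := −(F*_s × F*_z)/|F*_s × F*_z| is given by ν(s,z) = (−cos(z)/cosh(s), sin(z)/cosh(s), tanh(s)). -/
open Real

/-- Cross product of the partial derivatives of the bent helicoid parametrization,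
its squared length, and the unit normal
`ν(s,z) = (−cos z / cosh s, sin z / cosh s, tanh s)`. -/
theorem bent_helicoid_normal
    (lam σ : ℝ → ℝ) (hlam : ContDiff ℝ (⊤ : ℕ∞) lam) (hpos : ∀ z, 0 < lam z)
    (hσ : ∀ z, HasDerivAt σ (lam z) z) :
    ∀ s z : ℝ,
      let F : ℝ → ℝ → ℝ × ℝ × ℝ := fun s z =>
        (lam z * Real.sinh s * Real.sin z, lam z * Real.sinh s * Real.cos z, σ z)
      let Fs : ℝ × ℝ × ℝ := deriv (fun s' => F s' z) s
      let Fz : ℝ × ℝ × ℝ := deriv (fun z' => F s z') z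
      let cross : ℝ × ℝ × ℝ → ℝ × ℝ × ℝ → ℝ × ℝ × ℝ := fun a b =>
        (a.2.1 * b.2.2 - a.2.2 * b.2.1,
         a.2.2 * b.1 - a.1 * b.2.2,
         a.1 * b.2.1 - a.2.1 * b.1)
      let dot : ℝ × ℝ × ℝ → ℝ × ℝ × ℝ → ℝ :=
        fun a b => a.1 * b.1 + a.2.1 * b.2.1 + a.2.2 * b.2.2
      let c : ℝ × ℝ × ℝ := cross Fs Fz
      let nu : ℝ × ℝ × ℝ := (-(Real.sqrt (dot c c))⁻¹) • c
      c = (-((lam z)^2 * Real.cosh s * Real.sinh s)) • ((0:ℝ), (0:ℝ), (1:ℝ))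
            + ((lam z)^2 * Real.cosh s) • (Real.cos z, -Real.sin z, (0:ℝ)) ∧
      dot c c = (lam z)^4 * (Real.cosh s)^4 ∧
      nu = (-Real.cos z / Real.cosh s, Real.sin z / Real.cosh s, Real.tanh s) := by
  intro s z F Fs Fz cross dot c nu
  have hlamd : HasDerivAt lam (deriv lam z) z :=
    ((hlam.differentiable (by simp)) z).hasDerivAt
  set L := lam z with hL
  set A := deriv lam z with hA
  -- derivative in s
  have hFs : HasDerivAt (fun s' => F s' z)
      (L * Real.cosh s * Real.sin z, L * Real.cosh s * Real.cos z, 0) s := by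
    have h1 : HasDerivAt (fun s' => L * Real.sinh s' * Real.sin z)
        (L * Real.cosh s * Real.sin z) s :=
      ((Real.hasDerivAt_sinh s).const_mul L).mul_const _
    have h2 : HasDerivAt (fun s' => L * Real.sinh s' * Real.cos z)
        (L * Real.cosh s * Real.cos z) s :=
      ((Real.hasDerivAt_sinh s).const_mul L).mul_const _
    have h3 : HasDerivAt (fun _ : ℝ => σ z) 0 s := hasDerivAt_const _ _
    exact h1.prodMk (h2.prodMk h3)
  -- derivative in z
  have hFz : HasDerivAt (fun z' => F s z')
      (A * Real.sinh s * Real.sin z + L * Real.sinh s * Real.cos z,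
       A * Real.sinh s * Real.cos z - L * Real.sinh s * Real.sin z, L) z := by
    have h1 : HasDerivAt (fun z' => lam z' * Real.sinh s * Real.sin z')
        (A * Real.sinh s * Real.sin z + L * Real.sinh s * Real.cos z) z := by
      have := (hlamd.mul_const (Real.sinh s)).mul (Real.hasDerivAt_sin z)
      exact this
    have h2 : HasDerivAt (fun z' => lam z' * Real.sinh s * Real.cos z')
        (A * Real.sinh s * Real.cos z - L * Real.sinh s * Real.sin z) z := by
      have := (hlamd.mul_const (Real.sinh s)).mul (Real.hasDerivAt_cos z)
      rw [show A * Real.sinh s * Real.cos z - L * Real.sinh s * Real.sin z = A * Real.sinh s * Real.cos z + L * Real.sinh s * -Real.sin z by ring]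
      exact this
    exact h1.prodMk (h2.prodMk (hσ z))
  have hFs' : Fs = (L * Real.cosh s * Real.sin z, L * Real.cosh s * Real.cos z, 0) :=
    hFs.deriv
  have hFz' : Fz = (A * Real.sinh s * Real.sin z + L * Real.sinh s * Real.cos z,
       A * Real.sinh s * Real.cos z - L * Real.sinh s * Real.sin z, L) :=
    hFz.deriv
  have hsc : Real.sin z ^ 2 + Real.cos z ^ 2 = 1 := Real.sin_sq_add_cos_sq z
  have hc : c = (L^2 * Real.cosh s * Real.cos z, -(L^2 * Real.cosh s * Real.sin z),
      -(L^2 * Real.cosh s * Real.sinh s)) := by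
    show cross Fs Fz = _
    rw [hFs', hFz']
    simp only [cross]
    refine Prod.ext ?_ (Prod.ext ?_ ?_) <;> simp
    · ring
    · ring
    · linear_combination (-(L^2 * Real.cosh s * Real.sinh s)) * hsc
  have hcosh : Real.cosh s ^ 2 = 1 + Real.sinh s ^ 2 := by
    nlinarith [Real.cosh_sq_sub_sinh_sq s]
  have hdot : dot c c = L^4 * Real.cosh s ^ 4 := by
    rw [hc]; simp only [dot]; nlinarith [hsc, hcosh]
  have hLpos : 0 < L := hpos z
  have hchpos : 0 < Real.cosh s := Real.cosh_pos s
  have hsqrt : Real.sqrt (dot c c) = L^2 * Real.cosh s ^ 2 := by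
    rw [hdot]
    rw [show L^4 * Real.cosh s ^ 4 = (L^2 * Real.cosh s ^ 2)^2 by ring]
    exact Real.sqrt_sq (by positivity)
  refine ⟨?_, hdot, ?_⟩
  · rw [hc]
    refine Prod.ext ?_ (Prod.ext ?_ ?_) <;> simp <;> ring
  · show (-(Real.sqrt (dot c c))⁻¹) • c = _
    rw [hsqrt, hc]
    have h1 : Real.tanh s = Real.sinh s / Real.cosh s := Real.tanh_eq_sinh_div_cosh s
    refine Prod.ext ?_ (Prod.ext ?_ ?_) <;> simp [h1] <;> field_simp <;> ring
end

section
/- Let ν(s,z) = (−cos(z)/cosh(s), sin(z)/cosh(s), tanh(s)) be the unit normal of F*, and define the second fundamental form coefficients A_ss := ⟨F*_ss, ν⟩, A_sz := ⟨F*_sz, ν⟩, A_zz := ⟨F*_zz, ν⟩, where subscripts denote second partial derivatives of F*. Then for all (s,z) ∈ ℝ²: A_ss = 0, A_sz = −λ(z), and A_zz = −λ'(z) tanh(s). -/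
open Real

/-- Second fundamental form coefficients of the bent helicoid parametrization:
`A_ss = 0`, `A_sz = −λ(z)`, `A_zz = −λ'(z) tanh s`. -/
theorem bent_helicoid_second_fundamental_form
    (lam σ : ℝ → ℝ) (hlam : ContDiff ℝ (⊤ : ℕ∞) lam) (hpos : ∀ z, 0 < lam z)
    (hσ : ∀ z, HasDerivAt σ (lam z) z) :
    ∀ s z : ℝ,
      let F : ℝ → ℝ → ℝ × ℝ × ℝ := fun s z =>
        (lam z * Real.sinh s * Real.sin z, lam z * Real.sinh s * Real.cos z, σ z)
      let nu : ℝ × ℝ × ℝ :=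
        (-Real.cos z / Real.cosh s, Real.sin z / Real.cosh s, Real.tanh s)
      let dot : ℝ × ℝ × ℝ → ℝ × ℝ × ℝ → ℝ :=
        fun a b => a.1 * b.1 + a.2.1 * b.2.1 + a.2.2 * b.2.2
      let Fss : ℝ × ℝ × ℝ := deriv (fun s' => deriv (fun s'' => F s'' z) s') s
      let Fsz : ℝ × ℝ × ℝ := deriv (fun z' => deriv (fun s' => F s' z') s) z
      let Fzz : ℝ × ℝ × ℝ := deriv (fun z' => deriv (fun z'' => F s z'') z') z
      dot Fss nu = 0 ∧
      dot Fsz nu = -(lam z) ∧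
      dot Fzz nu = -(deriv lam z) * Real.tanh s := by
  obtain ⟨hdiff, hlam'⟩ := contDiff_infty_iff_deriv.mp (hlam.of_le (by simp))
  have hd : ∀ z, HasDerivAt lam (deriv lam z) z := fun z => (hdiff z).hasDerivAt
  have hd2 : ∀ z, HasDerivAt (deriv lam) (deriv (deriv lam) z) z :=
    fun z => ((contDiff_infty_iff_deriv.mp hlam').1 z).hasDerivAt
  intro s z
  have hc : Real.cosh s ≠ 0 := (Real.cosh_pos s).ne'
  intro F nu dot Fss Fsz Fzz
  -- first partial in s
  have hFs : ∀ z' s', HasDerivAt (fun s'' =>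
      (lam z' * Real.sinh s'' * Real.sin z', lam z' * Real.sinh s'' * Real.cos z', σ z'))
      (lam z' * Real.cosh s' * Real.sin z', lam z' * Real.cosh s' * Real.cos z', (0:ℝ)) s' :=
    fun z' s' =>
      (((Real.hasDerivAt_sinh s').const_mul (lam z')).mul_const (Real.sin z')).prodMk
        ((((Real.hasDerivAt_sinh s').const_mul (lam z')).mul_const (Real.cos z')).prodMk
          (hasDerivAt_const s' (σ z')))
  -- first partial in z
  have hFz : ∀ s' z', HasDerivAt (fun z'' =>
      (lam z'' * Real.sinh s' * Real.sin z'', lam z'' * Real.sinh s' * Real.cos z'', σ z''))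
      (deriv lam z' * Real.sinh s' * Real.sin z' + lam z' * Real.sinh s' * Real.cos z',
       deriv lam z' * Real.sinh s' * Real.cos z' + lam z' * Real.sinh s' * -Real.sin z',
       lam z') z' :=
    fun s' z' =>
      ((((hd z').mul_const (Real.sinh s')).mul (Real.hasDerivAt_sin z')).prodMk
        (((((hd z').mul_const (Real.sinh s')).mul (Real.hasDerivAt_cos z'))).prodMk (hσ z')))
  -- second partials
  have hFss : HasDerivAt (fun s' =>
      (lam z * Real.cosh s' * Real.sin z, lam z * Real.cosh s' * Real.cos z, (0:ℝ)))
      (lam z * Real.sinh s * Real.sin z, lam z * Real.sinh s * Real.cos z, (0:ℝ)) s :=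
    (((Real.hasDerivAt_cosh s).const_mul (lam z)).mul_const (Real.sin z)).prodMk
      ((((Real.hasDerivAt_cosh s).const_mul (lam z)).mul_const (Real.cos z)).prodMk
        (hasDerivAt_const s (0:ℝ)))
  have hFsz : HasDerivAt (fun z' =>
      (lam z' * Real.cosh s * Real.sin z', lam z' * Real.cosh s * Real.cos z', (0:ℝ)))
      (deriv lam z * Real.cosh s * Real.sin z + lam z * Real.cosh s * Real.cos z,
       deriv lam z * Real.cosh s * Real.cos z + lam z * Real.cosh s * -Real.sin z,
       (0:ℝ)) z :=
    ((((hd z).mul_const (Real.cosh s)).mul (Real.hasDerivAt_sin z)).prodMk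
      (((((hd z).mul_const (Real.cosh s)).mul (Real.hasDerivAt_cos z))).prodMk
        (hasDerivAt_const z (0:ℝ))))
  have hFzz : HasDerivAt (fun z' =>
      (deriv lam z' * Real.sinh s * Real.sin z' + lam z' * Real.sinh s * Real.cos z',
       deriv lam z' * Real.sinh s * Real.cos z' + lam z' * Real.sinh s * -Real.sin z',
       lam z'))
      ((deriv (deriv lam) z * Real.sinh s * Real.sin z + deriv lam z * Real.sinh s * Real.cos z)
        + (deriv lam z * Real.sinh s * Real.cos z + lam z * Real.sinh s * -Real.sin z),
       (deriv (deriv lam) z * Real.sinh s * Real.cos z + deriv lam z * Real.sinh s * -Real.sin z)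
        + (deriv lam z * Real.sinh s * -Real.sin z + lam z * Real.sinh s * -Real.cos z),
       deriv lam z) z :=
    (((((hd2 z).mul_const (Real.sinh s)).mul (Real.hasDerivAt_sin z)).add
        (((hd z).mul_const (Real.sinh s)).mul (Real.hasDerivAt_cos z))).prodMk
      (((((hd2 z).mul_const (Real.sinh s)).mul (Real.hasDerivAt_cos z)).add
        (((hd z).mul_const (Real.sinh s)).mul ((Real.hasDerivAt_sin z).neg))).prodMk (hd z)))
  have e1 : (fun s' => deriv (fun s'' => F s'' z) s')
      = fun s' => (lam z * Real.cosh s' * Real.sin z, lam z * Real.cosh s' * Real.cos z, (0:ℝ)) :=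
    funext fun s' => (hFs z s').deriv
  have e2 : (fun z' => deriv (fun s' => F s' z') s)
      = fun z' => (lam z' * Real.cosh s * Real.sin z', lam z' * Real.cosh s * Real.cos z', (0:ℝ)) :=
    funext fun z' => (hFs z' s).deriv
  have e3 : (fun z' => deriv (fun z'' => F s z'') z')
      = fun z' =>
      (deriv lam z' * Real.sinh s * Real.sin z' + lam z' * Real.sinh s * Real.cos z',
       deriv lam z' * Real.sinh s * Real.cos z' + lam z' * Real.sinh s * -Real.sin z',
       lam z') :=
    funext fun z' => (hFz s z').deriv
  have hFssv : Fss = (lam z * Real.sinh s * Real.sin z, lam z * Real.sinh s * Real.cos z, (0:ℝ)) := by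
    show deriv _ s = _
    rw [e1, hFss.deriv]
  have hFszv : Fsz = (deriv lam z * Real.cosh s * Real.sin z + lam z * Real.cosh s * Real.cos z,
      deriv lam z * Real.cosh s * Real.cos z + lam z * Real.cosh s * -Real.sin z, (0:ℝ)) := by
    show deriv _ z = _
    rw [e2, hFsz.deriv]
  have hFzzv : Fzz =
      ((deriv (deriv lam) z * Real.sinh s * Real.sin z + deriv lam z * Real.sinh s * Real.cos z)
        + (deriv lam z * Real.sinh s * Real.cos z + lam z * Real.sinh s * -Real.sin z),
       (deriv (deriv lam) z * Real.sinh s * Real.cos z + deriv lam z * Real.sinh s * -Real.sin z)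
        + (deriv lam z * Real.sinh s * -Real.sin z + lam z * Real.sinh s * -Real.cos z),
       deriv lam z) := by
    show deriv _ z = _
    rw [e3, hFzz.deriv]
  have hpyth := Real.sin_sq_add_cos_sq z
  have htanh := Real.tanh_eq_sinh_div_cosh s
  refine ⟨?_, ?_, ?_⟩
  · simp only [dot, nu, hFssv]
    ring
  · simp only [dot, nu, hFszv]
    field_simp
    linear_combination (-(lam z)) * hpyth
  · simp only [dot, nu, hFzzv, htanh]
    field_simp
    linear_combination (-2 * deriv lam z * Real.sinh s) * hpyth
end

section
/- Let μ(z) := λ'(z)/λ(z). For every twice continuously differentiable function u : ℝ² → ℝ, the Laplace–Beltrami operator of the metric of F*, written in coordinates as Δ_g u = (1/√(det g)) [∂_s(√(det g)(g^{ss} u_s + g^{sz} u_z)) + ∂_z(√(det g)(g^{sz} u_s + g^{zz} u_z))], satisfies at every (s,z): λ(z)² cosh²(s) (Δ_g u)(s,z) = (1 + μ(z)² tanh²(s)) u_ss + u_zz − 2 μ(z) tanh(s) u_sz + (2 μ(z)² tanh(s) cosh⁻²(s) − μ'(z) tanh(s)) u_s − μ(z) cosh⁻²(s) u_z. -/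
open Real

set_option maxHeartbeats 2000000 in
/-- Coordinate expression for the Laplace–Beltrami operator of the bent helicoid metric:
`λ² cosh²(s) Δ_g u = (1 + μ² tanh² s) u_ss + u_zz − 2 μ tanh s · u_sz
 + (2 μ² tanh s cosh⁻² s − μ' tanh s) u_s − μ cosh⁻² s · u_z`, where `μ = λ'/λ`. -/
theorem bent_helicoid_laplacian
    (lam : ℝ → ℝ) (hlam : ContDiff ℝ (⊤ : ℕ∞) lam) (hpos : ∀ z, 0 < lam z)
    (u : ℝ × ℝ → ℝ) (hu : ContDiff ℝ 2 u) :
    ∀ s z : ℝ,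
      let mu : ℝ → ℝ := fun z => deriv lam z / lam z
      let us : ℝ → ℝ → ℝ := fun s z => deriv (fun s' => u (s', z)) s
      let uz : ℝ → ℝ → ℝ := fun s z => deriv (fun z' => u (s, z')) z
      let uss : ℝ := deriv (fun s' => us s' z) s
      let uzz : ℝ := deriv (fun z' => uz s z') z
      let usz : ℝ := deriv (fun z' => us s z') z
      let detg : ℝ → ℝ → ℝ := fun s z => (lam z)^4 * (Real.cosh s)^4
      -- dual (inverse) metric coefficients
      let invgss : ℝ → ℝ → ℝ := fun s z =>
        ((lam z)^2 * (Real.cosh s)^2 + (deriv lam z)^2 * (Real.sinh s)^2) / detg s z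
      let invgzz : ℝ → ℝ → ℝ := fun s z => ((lam z)^2 * (Real.cosh s)^2) / detg s z
      let invgsz : ℝ → ℝ → ℝ := fun s z =>
        -(lam z * deriv lam z * Real.sinh s * Real.cosh s) / detg s z
      -- Laplace–Beltrami operator in coordinates
      let lap : ℝ :=
        (Real.sqrt (detg s z))⁻¹ *
          (deriv (fun s' => Real.sqrt (detg s' z) *
              (invgss s' z * us s' z + invgsz s' z * uz s' z)) s
           + deriv (fun z' => Real.sqrt (detg s z') *
              (invgsz s z' * us s z' + invgzz s z' * uz s z')) z)
      (lam z)^2 * (Real.cosh s)^2 * lap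
        = (1 + (mu z)^2 * (Real.tanh s)^2) * uss + uzz
          - 2 * mu z * Real.tanh s * usz
          + (2 * (mu z)^2 * Real.tanh s / (Real.cosh s)^2
              - deriv mu z * Real.tanh s) * us s z
          - mu z / (Real.cosh s)^2 * uz s z := by
  intro s z
  dsimp only
  -- basic facts
  have hud : Differentiable ℝ u := hu.differentiable (by norm_num)
  have hf1 : ContDiff ℝ 1 (fderiv ℝ u) := hu.fderiv_right (by norm_num)
  have hf' : Differentiable ℝ (fderiv ℝ u) := hf1.differentiable (by norm_num)
  have hsq : ∀ z' s' : ℝ, Real.sqrt (lam z' ^ 4 * Real.cosh s' ^ 4)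
      = lam z' ^ 2 * Real.cosh s' ^ 2 := by
    intro z' s'
    rw [show lam z' ^ 4 * Real.cosh s' ^ 4 = (lam z' ^ 2 * Real.cosh s' ^ 2) ^ 2 by ring,
      Real.sqrt_sq (by positivity)]
  -- first partial derivatives as fderiv applications
  have husP : ∀ a b : ℝ, HasDerivAt (fun s' => u (s', b)) (fderiv ℝ u (a, b) (1, 0)) a := by
    intro a b
    exact (hud (a, b)).hasFDerivAt.comp_hasDerivAt a
      ((hasDerivAt_id a).prodMk (hasDerivAt_const a b))
  have huzQ : ∀ a b : ℝ, HasDerivAt (fun z' => u (a, z')) (fderiv ℝ u (a, b) (0, 1)) b := by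
    intro a b
    exact (hud (a, b)).hasFDerivAt.comp_hasDerivAt b
      ((hasDerivAt_const b a).prodMk (hasDerivAt_id b))
  -- second derivatives
  have hP_s : HasDerivAt (fun s' => fderiv ℝ u (s', z) ((1 : ℝ), (0 : ℝ)))
      (fderiv ℝ (fderiv ℝ u) (s, z) (1, 0) (1, 0)) s := by
    have h2 : HasDerivAt (fun s' => fderiv ℝ u (s', z)) (fderiv ℝ (fderiv ℝ u) (s, z) (1, 0)) s :=
      (hf' (s, z)).hasFDerivAt.comp_hasDerivAt s ((hasDerivAt_id s).prodMk (hasDerivAt_const s z))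
    simpa using h2.clm_apply (hasDerivAt_const s ((1 : ℝ), (0 : ℝ)))
  have hQ_s : HasDerivAt (fun s' => fderiv ℝ u (s', z) ((0 : ℝ), (1 : ℝ)))
      (fderiv ℝ (fderiv ℝ u) (s, z) (1, 0) (0, 1)) s := by
    have h2 : HasDerivAt (fun s' => fderiv ℝ u (s', z)) (fderiv ℝ (fderiv ℝ u) (s, z) (1, 0)) s :=
      (hf' (s, z)).hasFDerivAt.comp_hasDerivAt s ((hasDerivAt_id s).prodMk (hasDerivAt_const s z))
    simpa using h2.clm_apply (hasDerivAt_const s ((0 : ℝ), (1 : ℝ)))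
  have hP_z : HasDerivAt (fun z' => fderiv ℝ u (s, z') ((1 : ℝ), (0 : ℝ)))
      (fderiv ℝ (fderiv ℝ u) (s, z) (0, 1) (1, 0)) z := by
    have h2 : HasDerivAt (fun z' => fderiv ℝ u (s, z')) (fderiv ℝ (fderiv ℝ u) (s, z) (0, 1)) z :=
      (hf' (s, z)).hasFDerivAt.comp_hasDerivAt z ((hasDerivAt_const z s).prodMk (hasDerivAt_id z))
    simpa using h2.clm_apply (hasDerivAt_const z ((1 : ℝ), (0 : ℝ)))
  have hQ_z : HasDerivAt (fun z' => fderiv ℝ u (s, z') ((0 : ℝ), (1 : ℝ)))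
      (fderiv ℝ (fderiv ℝ u) (s, z) (0, 1) (0, 1)) z := by
    have h2 : HasDerivAt (fun z' => fderiv ℝ u (s, z')) (fderiv ℝ (fderiv ℝ u) (s, z) (0, 1)) z :=
      (hf' (s, z)).hasFDerivAt.comp_hasDerivAt z ((hasDerivAt_const z s).prodMk (hasDerivAt_id z))
    simpa using h2.clm_apply (hasDerivAt_const z ((0 : ℝ), (1 : ℝ)))
  -- symmetry of second derivatives
  have hsymm : fderiv ℝ (fderiv ℝ u) (s, z) (1, 0) (0, 1)
      = fderiv ℝ (fderiv ℝ u) (s, z) (0, 1) (1, 0) :=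
    second_derivative_symmetric (fun y => (hud y).hasFDerivAt) ((hf' (s, z)).hasFDerivAt)
      (1, 0) (0, 1)
  -- derivative of tanh-like function
  have hT : HasDerivAt (fun s' => Real.sinh s' / Real.cosh s') (1 / Real.cosh s ^ 2) s := by
    have : HasDerivAt (fun s' => Real.sinh s' / Real.cosh s') _ s := (Real.hasDerivAt_sinh s).div (Real.hasDerivAt_cosh s) (Real.cosh_pos s).ne'
    convert this using 1
    field_simp
    nlinarith [Real.cosh_sq_sub_sinh_sq s]
  -- mu is differentiable
  have hld : ContDiff ℝ 1 (deriv lam) := by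
    have h2 : ContDiff ℝ (1 + 1 : ℕ) lam := hlam.of_le (by exact WithTop.coe_le_coe.mpr (le_top : ((1 + 1 : ℕ) : ℕ∞) ≤ ⊤))
    exact (contDiff_succ_iff_deriv.mp (by exact_mod_cast h2)).2.2
  have hmu : HasDerivAt (fun z' => deriv lam z' / lam z')
      (deriv (fun z' => deriv lam z' / lam z') z) z := by
    refine DifferentiableAt.hasDerivAt ?_
    exact ((hld.differentiable (by norm_num)) z).div ((hlam.differentiable (by simp)) z) (hpos z).ne'
  -- simplify the two integrands
  have hfunS : (fun s' =>
      Real.sqrt (lam z ^ 4 * Real.cosh s' ^ 4) *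
        ((lam z ^ 2 * Real.cosh s' ^ 2 + deriv lam z ^ 2 * Real.sinh s' ^ 2) /
            (lam z ^ 4 * Real.cosh s' ^ 4) * deriv (fun s' => u (s', z)) s' +
          -(lam z * deriv lam z * Real.sinh s' * Real.cosh s') / (lam z ^ 4 * Real.cosh s' ^ 4) *
            deriv (fun z' => u (s', z')) z))
      = fun s' =>
        (1 + (deriv lam z / lam z) ^ 2 * (Real.sinh s' / Real.cosh s') ^ 2) *
            fderiv ℝ u (s', z) ((1 : ℝ), (0 : ℝ))
          - deriv lam z / lam z * (Real.sinh s' / Real.cosh s') *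
            fderiv ℝ u (s', z) ((0 : ℝ), (1 : ℝ)) := by
    funext s'
    rw [(husP s' z).deriv, (huzQ s' z).deriv, hsq z s']
    have h1 := (hpos z).ne'
    have h2 := (Real.cosh_pos s').ne'
    field_simp
    ring
  have hfunZ : (fun z' =>
      Real.sqrt (lam z' ^ 4 * Real.cosh s ^ 4) *
        (-(lam z' * deriv lam z' * Real.sinh s * Real.cosh s) / (lam z' ^ 4 * Real.cosh s ^ 4) *
            deriv (fun s' => u (s', z')) s +
          lam z' ^ 2 * Real.cosh s ^ 2 / (lam z' ^ 4 * Real.cosh s ^ 4) *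
            deriv (fun z' => u (s, z')) z'))
      = fun z' =>
        -(deriv lam z' / lam z' * (Real.sinh s / Real.cosh s)) *
            fderiv ℝ u (s, z') ((1 : ℝ), (0 : ℝ))
          + fderiv ℝ u (s, z') ((0 : ℝ), (1 : ℝ)) := by
    funext z'
    rw [(husP s z').deriv, (huzQ s z').deriv, hsq z' s]
    have h1 := (hpos z').ne'
    have h2 := (Real.cosh_pos s).ne'
    field_simp
  -- derivatives of the simplified integrands
  have hDS : HasDerivAt (fun s' =>
        (1 + (deriv lam z / lam z) ^ 2 * (Real.sinh s' / Real.cosh s') ^ 2) *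
            fderiv ℝ u (s', z) ((1 : ℝ), (0 : ℝ))
          - deriv lam z / lam z * (Real.sinh s' / Real.cosh s') *
            fderiv ℝ u (s', z) ((0 : ℝ), (1 : ℝ))) _ s := (((hasDerivAt_const s (1 : ℝ)).add
      ((hasDerivAt_const s ((deriv lam z / lam z) ^ 2)).mul (hT.pow 2))).mul hP_s).sub
    (((hasDerivAt_const s (deriv lam z / lam z)).mul hT).mul hQ_s)
  have hDZ : HasDerivAt (fun z' =>
        -(deriv lam z' / lam z' * (Real.sinh s / Real.cosh s)) *
            fderiv ℝ u (s, z') ((1 : ℝ), (0 : ℝ))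
          + fderiv ℝ u (s, z') ((0 : ℝ), (1 : ℝ))) _ z := ((hmu.mul (hasDerivAt_const z (Real.sinh s / Real.cosh s))).neg.mul hP_z).add hQ_z
  -- rewrite first partials in the statement
  have hus_eq : (fun s' => deriv (fun s'' => u (s'', z)) s')
      = fun s' => fderiv ℝ u (s', z) ((1 : ℝ), (0 : ℝ)) := funext fun a => (husP a z).deriv
  have huz_eq : (fun z' => deriv (fun z'' => u (s, z'')) z')
      = fun z' => fderiv ℝ u (s, z') ((0 : ℝ), (1 : ℝ)) := funext fun b => (huzQ s b).deriv
  have husz_eq : (fun z' => deriv (fun s' => u (s', z')) s)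
      = fun z' => fderiv ℝ u (s, z') ((1 : ℝ), (0 : ℝ)) := funext fun b => (husP s b).deriv
  rw [hfunS, hfunZ, hDS.deriv, hDZ.deriv, hsq z s, hus_eq, huz_eq, husz_eq,
    hP_s.deriv, hQ_z.deriv, hP_z.deriv, (husP s z).deriv, (huzQ s z).deriv, hsymm,
    Real.tanh_eq_sinh_div_cosh]
  simp only [Pi.add_apply, Pi.mul_apply, Pi.pow_apply, Pi.neg_apply]
  have h1 := (hpos z).ne'
  have h2 := (Real.cosh_pos s).ne'
  field_simp
  have h3 : Real.cosh s * (Real.cosh s)⁻¹ = 1 := mul_inv_cancel₀ h2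
  linear_combination (2 * Real.sinh s * deriv lam z ^ 2 * fderiv ℝ u (s, z) ((1 : ℝ), (0 : ℝ))) * h3
end

section
/- Let f : [0,∞) → ℝ be continuous and define u : [0,∞) → ℝ by u(s) = tanh(s) · ∫₀^s tanh(t)⁻² (∫₀^t tanh(r) f(r) dr) dt for s > 0 and u(0) = 0 (the inner expression extends continuously to t = 0). Then u is twice continuously differentiable on (0,∞), u(0) = 0, and u''(s) + 2 cosh⁻²(s) u(s) = f(s) for all s > 0; that is, variation of parameters with the kernel element tanh(s) inverts the operator L̃f = f'' + 2cosh⁻²·f while preserving the zero Dirichlet condition at s = 0. -/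
/-! Since `tanh'' + 2 cosh⁻² tanh = 0`, reduction of order applies: for `u = tanh · v` one has
`u'' + 2 cosh⁻² u = (tanh² v')' / tanh`, so `v' = tanh⁻² ∫₀ᵗ tanh · f` solves the equation.
The only analytic point is the integrability of `v'` at `0`: there `∫₀ᵗ tanh · f = O(t tanh t)`,
which keeps `v'` bounded. -/

open Real Set MeasureTheory intervalIntegral

namespace Real

lemma hasDerivAt_tanh (x : ℝ) : HasDerivAt tanh (cosh x ^ 2)⁻¹ x := by
  rw [show tanh = sinh / cosh from funext tanh_eq_sinh_div_cosh]
  refine ((hasDerivAt_sinh x).div (hasDerivAt_cosh x) (cosh_pos x).ne').congr_deriv ?_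
  rw [← sq, ← sq, cosh_sq_sub_sinh_sq, one_div]

lemma continuous_tanh : Continuous tanh :=
  continuous_iff_continuousAt.2 fun x => (hasDerivAt_tanh x).continuousAt

lemma monotone_tanh : Monotone tanh :=
  monotone_of_deriv_nonneg (fun x => (hasDerivAt_tanh x).differentiableAt)
    fun x => (hasDerivAt_tanh x).deriv ▸ by positivity

lemma tanh_pos {x : ℝ} (hx : 0 < x) : 0 < tanh x := by
  rw [tanh_eq_sinh_div_cosh]
  exact div_pos (sinh_pos_iff.2 hx) (cosh_pos x)

lemma tanh_nonneg {x : ℝ} (hx : 0 ≤ x) : 0 ≤ tanh x := by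
  simpa using monotone_tanh hx

/-- As `tanh' = cosh⁻²`, this says `tanh'' + 2 cosh⁻² tanh = 0`. -/
lemma hasDerivAt_inv_cosh_sq (x : ℝ) :
    HasDerivAt (fun y => (cosh y ^ 2)⁻¹) (-(2 * (cosh x ^ 2)⁻¹ * tanh x)) x := by
  refine (((hasDerivAt_cosh x).pow 2).inv (pow_ne_zero 2 (cosh_pos x).ne')).congr_deriv ?_
  rw [Pi.pow_apply, tanh_eq_sinh_div_cosh]
  field_simp
  ring

end Real

theorem hasDerivAt_integral_of_continuousOn_Ioi {h : ℝ → ℝ} {a x : ℝ}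
    (hint : IntervalIntegrable h volume a x) (hh : ContinuousOn h (Ioi a)) (hx : a < x) :
    HasDerivAt (fun t => ∫ r in a..t, h r) (h x) x :=
  integral_hasDerivAt_right hint (hh.stronglyMeasurableAtFilter isOpen_Ioi x hx)
    (hh.continuousAt (isOpen_Ioi.mem_nhds hx))

/-- `(φ v)' = φ' v + g / φ`, and on differentiating again the two `φ' g / φ²` terms cancel. -/
theorem hasDerivAt_deriv_mul_of_kernel {φ φ' q g v f : ℝ → ℝ} {U : Set ℝ} (hU : IsOpen U)
    (hφ : ∀ x ∈ U, HasDerivAt φ (φ' x) x) (hφ' : ∀ x ∈ U, HasDerivAt φ' (-(q x * φ x)) x)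
    (hφ0 : ∀ x ∈ U, φ x ≠ 0) (hg : ∀ x ∈ U, HasDerivAt g (φ x * f x) x)
    (hv : ∀ x ∈ U, HasDerivAt v ((φ x ^ 2)⁻¹ * g x) x) {x : ℝ} (hx : x ∈ U) :
    HasDerivAt (deriv fun y => φ y * v y) (f x - q x * (φ x * v x)) x := by
  have hderiv : deriv (fun y => φ y * v y) =ᶠ[nhds x] fun y => φ' y * v y + g y / φ y := by
    filter_upwards [hU.mem_nhds hx] with y hy
    rw [HasDerivAt.deriv (f := fun y => φ y * v y) ((hφ y hy).mul (hv y hy))]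
    field_simp [hφ0 y hy]
  refine HasDerivAt.congr_of_eventuallyEq ?_ hderiv
  refine (((hφ' x hx).mul (hv x hx)).add ((hg x hx).div (hφ x hx) (hφ0 x hx))).congr_deriv ?_
  field_simp [hφ0 x hx]
  ring

theorem contDiffOn_two_of_hasDerivAt_deriv {u u'' : ℝ → ℝ} {U : Set ℝ} (hU : IsOpen U)
    (hu : DifferentiableOn ℝ u U) (hu' : ∀ x ∈ U, HasDerivAt (deriv u) (u'' x) x)
    (hu'' : ContinuousOn u'' U) : ContDiffOn ℝ 2 u U := by
  rw [show (2 : WithTop ℕ∞) = 1 + 1 from rfl, contDiffOn_succ_iff_deriv_of_isOpen hU,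
    show (1 : WithTop ℕ∞) = 0 + 1 from rfl, contDiffOn_succ_iff_deriv_of_isOpen hU,
    contDiffOn_zero]
  refine ⟨hu, by simp, fun x hx => (hu' x hx).differentiableAt.differentiableWithinAt, by simp,
    hu''.congr fun x hx => (hu' x hx).deriv⟩

section

variable {f : ℝ → ℝ}

lemma hasDerivAt_integral_tanh_mul (hf : ContinuousOn f (Ici 0)) {x : ℝ} (hx : 0 < x) :
    HasDerivAt (fun t => ∫ r in 0..t, tanh r * f r) (tanh x * f x) x := by
  have hcont : ContinuousOn (fun r => tanh r * f r) (Ici 0) := continuous_tanh.continuousOn.mul hf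
  refine hasDerivAt_integral_of_continuousOn_Ioi ?_ (hcont.mono Ioi_subset_Ici_self) hx
  exact (hcont.mono (by simp [uIcc_of_le hx.le, Icc_subset_Ici_self])).intervalIntegrable

lemma continuousOn_inv_tanh_sq_mul_integral (hf : ContinuousOn f (Ici 0)) :
    ContinuousOn (fun t => (tanh t ^ 2)⁻¹ * ∫ r in 0..t, tanh r * f r) (Ioi 0) :=
  ((continuous_tanh.pow 2).continuousOn.inv₀ fun _ hx => pow_ne_zero 2 (tanh_pos hx).ne').mul
    fun _ hx => (hasDerivAt_integral_tanh_mul hf hx).continuousAt.continuousWithinAt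

/-- `|∫₀ᵗ tanh · f| ≤ M t tanh t`, and `t / tanh t ≤ cosh t` because `t ≤ sinh t`. -/
lemma abs_inv_tanh_sq_mul_integral_le {M t : ℝ} (ht : 0 < t) (hM : ∀ r ∈ Ioc 0 t, |f r| ≤ M) :
    |(tanh t ^ 2)⁻¹ * ∫ r in 0..t, tanh r * f r| ≤ M * cosh t := by
  have hM0 : 0 ≤ M := (abs_nonneg _).trans (hM t ⟨ht, le_rfl⟩)
  have htanh := tanh_pos ht
  have hint : |∫ r in 0..t, tanh r * f r| ≤ M * tanh t * t := by
    have hbound : ∀ r ∈ uIoc 0 t, ‖tanh r * f r‖ ≤ M * tanh t := by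
      intro r hr
      rw [uIoc_of_le ht.le] at hr
      rw [norm_mul, norm_of_nonneg (tanh_nonneg hr.1.le), mul_comm M]
      exact mul_le_mul (monotone_tanh hr.2) (hM r hr) (norm_nonneg _) htanh.le
    simpa [abs_of_pos ht] using norm_integral_le_of_norm_le_const hbound
  have hsinh : t ≤ tanh t * cosh t := by
    rw [tanh_eq_sinh_div_cosh, div_mul_cancel₀ _ (cosh_pos t).ne']
    exact self_le_sinh_iff.2 ht.le
  rw [abs_mul, abs_inv, abs_pow, abs_of_pos htanh, inv_mul_le_iff₀ (by positivity)]
  calc _ ≤ M * tanh t * t := hint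
    _ ≤ M * tanh t * (tanh t * cosh t) := by gcongr
    _ = _ := by ring

lemma intervalIntegrable_inv_tanh_sq_mul_integral (hf : ContinuousOn f (Ici 0)) {b : ℝ}
    (hb : 0 < b) :
    IntervalIntegrable (fun t => (tanh t ^ 2)⁻¹ * ∫ r in 0..t, tanh r * f r) volume 0 b := by
  obtain ⟨M, hM⟩ := isCompact_Icc.exists_bound_of_continuousOn (hf.mono (Icc_subset_Ici_self : Icc 0 b ⊆ Ici 0))
  rw [intervalIntegrable_iff_integrableOn_Ioc_of_le hb.le]
  refine Integrable.mono' (g := fun _ => M * cosh b) (integrableOn_const measure_Ioc_lt_top.ne)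
    ((continuousOn_inv_tanh_sq_mul_integral hf).mono Ioc_subset_Ioi_self
      |>.aestronglyMeasurable measurableSet_Ioc) ?_
  refine (ae_restrict_iff' measurableSet_Ioc).2 (ae_of_all _ fun t ht => ?_)
  calc _ ≤ M * cosh t :=
        abs_inv_tanh_sq_mul_integral_le ht.1 fun r hr => hM r ⟨hr.1.le, hr.2.trans ht.2⟩
    _ ≤ M * cosh b := by
        have hM0 : 0 ≤ M := (norm_nonneg _).trans (hM b ⟨hb.le, le_rfl⟩)
        gcongr
        rw [cosh_le_cosh, abs_of_pos ht.1, abs_of_pos hb]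
        exact ht.2

end

/-- Variation of parameters with the kernel element `tanh` inverts the operator
`L̃ f = f'' + 2 cosh⁻² · f` while preserving the zero Dirichlet condition at `s = 0`. -/
theorem variation_of_parameters_inverts_Ltilde
    (f : ℝ → ℝ) (hf : ContinuousOn f (Set.Ici 0)) :
    let u : ℝ → ℝ := fun s =>
      Real.tanh s *
        ∫ t in (0:ℝ)..s, ((Real.tanh t)^2)⁻¹ * ∫ r in (0:ℝ)..t, Real.tanh r * f r
    ContDiffOn ℝ 2 u (Set.Ioi 0) ∧
    u 0 = 0 ∧
    ∀ s > (0:ℝ), deriv (deriv u) s + 2 * ((Real.cosh s)^2)⁻¹ * u s = f s := by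
  intro u
  have hv : ∀ x ∈ Ioi (0 : ℝ), HasDerivAt
      (fun s => ∫ t in (0:ℝ)..s, (tanh t ^ 2)⁻¹ * ∫ r in (0:ℝ)..t, tanh r * f r)
      ((tanh x ^ 2)⁻¹ * ∫ r in (0:ℝ)..x, tanh r * f r) x := fun x hx =>
    hasDerivAt_integral_of_continuousOn_Ioi (intervalIntegrable_inv_tanh_sq_mul_integral hf hx)
      (continuousOn_inv_tanh_sq_mul_integral hf) hx
  have hu : ∀ x ∈ Ioi (0 : ℝ), HasDerivAt u _ x := fun x hx => (hasDerivAt_tanh x).mul (hv x hx)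
  have hu' : ∀ x ∈ Ioi (0 : ℝ),
      HasDerivAt (deriv u) (f x - 2 * (cosh x ^ 2)⁻¹ * u x) x := fun x hx =>
    hasDerivAt_deriv_mul_of_kernel isOpen_Ioi (fun x _ => hasDerivAt_tanh x)
      (fun x _ => hasDerivAt_inv_cosh_sq x) (fun x hx => (tanh_pos hx).ne')
      (fun x hx => hasDerivAt_integral_tanh_mul hf hx) hv hx
  have hu_cont : ContinuousOn u (Ioi 0) := fun x hx => (hu x hx).continuousAt.continuousWithinAt
  refine ⟨contDiffOn_two_of_hasDerivAt_deriv isOpen_Ioi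
    (fun x hx => (hu x hx).differentiableAt.differentiableWithinAt) hu' ?_, by simp [u],
    fun s hs => by rw [(hu' s hs).deriv]; ring⟩
  exact (hf.mono Ioi_subset_Ici_self).sub
    ((continuousOn_const.mul ((continuous_cosh.pow 2).continuousOn.inv₀
      fun x _ => pow_ne_zero 2 (cosh_pos x).ne')).mul hu_cont)
end
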